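/- arXiv:1803.06623 — 2 statements merged into one kernel-verified Lean document; each statement's English description precedes it below -/
import Mathlib

section
/- For every n ∈ ℕ, n ≥ 1, and 1 ≤ p < ∞, and every f ∈ S_n^p, one has ‖f‖_∞ ≤ π ‖f‖_{S_1^p} ≤ π^2 ‖f‖_{S_2^p} ≤ ⋯ ≤ π^n ‖f‖_{S_n^p}; in particular ‖f‖_{S_{n-1}^p} ≤ π ‖f‖_{S_n^p}. -/
open MeasureTheory Metric Set Filter

/-- The Hardy space `p`-norm on the unit disk (as an extended real). -/
noncomputable def hardyNorm (p : ℝ) (f : ℂ → ℂ) : ENNReal :=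
  ⨆ r : Set.Ioo (0:ℝ) 1,
    ((∫⁻ θ in Set.Ioc (0:ℝ) (2*Real.pi),
        ENNReal.ofReal (‖f ((r:ℝ) * Complex.exp (θ * Complex.I))‖ ^ p)) /
      ENNReal.ofReal (2*Real.pi)) ^ (1/p)

/-- Sup norm over the unit disk. -/
noncomputable def supNorm (f : ℂ → ℂ) : ENNReal :=
  ⨆ z ∈ Metric.ball (0:ℂ) 1, ENNReal.ofReal (‖f z‖)

/-- The recursively defined norm of `S_n^p`: `‖f‖_{S_n^p} = |f 0| + ‖f'‖_{S_{n-1}^p}`. -/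
noncomputable def snNorm : ℕ → ℝ → (ℂ → ℂ) → ENNReal
  | 0, p, f => hardyNorm p f
  | n+1, p, f => ENNReal.ofReal (‖f 0‖) + snNorm n p (deriv f)

/-- Membership in the Hardy space `H^p` of the unit disk. -/
def MemHp (p : ℝ) (f : ℂ → ℂ) : Prop :=
  DifferentiableOn ℂ f (Metric.ball 0 1) ∧ hardyNorm p f < ⊤

/-- Membership in `S_n^p`: analytic on the disk with `n`-th derivative in `H^p`. -/
def MemS (n : ℕ) (p : ℝ) (f : ℂ → ℂ) : Prop :=
  DifferentiableOn ℂ f (Metric.ball 0 1) ∧ hardyNorm p (iteratedDeriv n f) < ⊤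

/-- Membership in `S_{n,0}^p`: members of `S_n^p` whose first `n` Taylor coefficients vanish. -/
def MemS0 (n : ℕ) (p : ℝ) (f : ℂ → ℂ) : Prop :=
  MemS n p f ∧ ∀ m < n, iteratedDeriv m f 0 = 0

/-- `(V_n f)(z) = (1/(n-1)!) ∫_0^z (z-ζ)^{n-1} f(ζ) dζ`, along the segment `ζ = t z`. -/
noncomputable def Vop (n : ℕ) (f : ℂ → ℂ) (z : ℂ) : ℂ :=
  (1 / (Nat.factorial (n-1) : ℂ)) *
    ∫ t in (0:ℝ)..1, z * (z - (t:ℂ) * z) ^ (n-1) * f ((t:ℂ) * z)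

/-- The Volterra operator `(T_z f)(z) = ∫_0^z f(ω) dω` along the segment. -/
noncomputable def Volterra (f : ℂ → ℂ) (z : ℂ) : ℂ :=
  ∫ t in (0:ℝ)..1, z * f ((t:ℂ) * z)

/-!
Both estimates come from expressing `f` through `f'`.

Along radii, `f (r ζ) = f 0 + ∫₀¹ r ζ f' (t r ζ) dt`. Minkowski's inequality on the circle and
Jensen's inequality in `t` give `‖f‖_{H^p} ≤ |f 0| + ‖f'‖_{H^p}`, hence
`‖f‖_{S_n^p} ≤ ‖f‖_{S_{n+1}^p}`, and the chain follows from `π ≥ 1`.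

For the sup norm, integrating Cauchy's formula by parts on `|ζ| = ρ > |z|` gives
`2πi (f z - f 0) = -∮ log (1 - z / ζ) f' ζ dζ`. Adding `∮ log (1 - z̄ ζ / ρ²) f' ζ dζ = 0`
(the integrand is holomorphic on the closed disc) changes the kernel into `conj L - L` with
`L = log (1 - z / ζ)`, which has modulus `2 |arg (1 - z / ζ)| ≤ π`. Hence `|f z - f 0|` is at most
`π` times the mean of `|f'|` on the circle, which is at most `π ‖f'‖_{H^p}`.
-/

open Complex ComplexConjugate
open scoped Real ENNReal

lemma rpow_lintegral_le_lintegral_rpow {α : Type*} [MeasurableSpace α] {μ : Measure α}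
    [IsProbabilityMeasure μ] {f : α → ℝ≥0∞} (hf : AEMeasurable f μ) {p : ℝ} (hp : 1 ≤ p) :
    (∫⁻ x, f x ∂μ) ^ p ≤ ∫⁻ x, f x ^ p ∂μ := by
  have hp0 : 0 < p := one_pos.trans_le hp
  have h := eLpNorm_le_eLpNorm_of_exponent_le (ENNReal.one_le_ofReal.2 hp) hf.aestronglyMeasurable
  rw [eLpNorm_one_eq_lintegral_enorm, eLpNorm_eq_lintegral_rpow_enorm_toReal
    (ENNReal.ofReal_pos.2 hp0).ne' ENNReal.ofReal_ne_top, ENNReal.toReal_ofReal hp0.le] at h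
  simp only [enorm_eq_self] at h
  calc (∫⁻ x, f x ∂μ) ^ p ≤ ((∫⁻ x, f x ^ p ∂μ) ^ (1 / p)) ^ p := by gcongr
    _ = ∫⁻ x, f x ^ p ∂μ := by rw [← ENNReal.rpow_mul, one_div_mul_cancel hp0.ne', ENNReal.rpow_one]

noncomputable def circleMeasure : Measure ℝ :=
  (ENNReal.ofReal (2 * π))⁻¹ • volume.restrict (Ioc 0 (2 * π))

instance : IsProbabilityMeasure circleMeasure := by
  constructor
  rw [circleMeasure, Measure.smul_apply, Measure.restrict_apply_univ, Real.volume_Ioc, sub_zero,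
    smul_eq_mul, ENNReal.inv_mul_cancel (by simp [Real.pi_pos]) ENNReal.ofReal_ne_top]

lemma hardyNorm_eq_iSup_eLpNorm {p : ℝ} (hp : 0 < p) (f : ℂ → ℂ) :
    hardyNorm p f =
      ⨆ r : Ioo (0 : ℝ) 1,
        eLpNorm (fun θ ↦ f (circleMap 0 r θ)) (ENNReal.ofReal p) circleMeasure := by
  refine iSup_congr fun r ↦ ?_
  rw [eLpNorm_eq_lintegral_rpow_enorm_toReal (ENNReal.ofReal_pos.2 hp).ne' ENNReal.ofReal_ne_top,
    ENNReal.toReal_ofReal hp.le, circleMeasure, lintegral_smul_measure, div_eq_mul_inv, mul_comm]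
  congr 3
  funext θ
  rw [circleMap_zero, ← ofReal_norm, ENNReal.ofReal_rpow_of_nonneg (norm_nonneg _) hp.le]

lemma eLpNorm_comp_circleMap_le_hardyNorm {p : ℝ} (hp : 0 < p) (f : ℂ → ℂ) {r : ℝ}
    (hr : r ∈ Ioo 0 1) :
    eLpNorm (fun θ ↦ f (circleMap 0 r θ)) (ENNReal.ofReal p) circleMeasure ≤ hardyNorm p f := by
  rw [hardyNorm_eq_iSup_eLpNorm hp]
  exact le_iSup (fun r : Ioo (0 : ℝ) 1 ↦
    eLpNorm (fun θ ↦ f (circleMap 0 r θ)) (ENNReal.ofReal p) circleMeasure) ⟨r, hr⟩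

lemma lintegral_enorm_rpow_le_hardyNorm_rpow {p : ℝ} (hp : 0 < p) (f : ℂ → ℂ) {r : ℝ}
    (hr : r ∈ Ioo 0 1) :
    ∫⁻ θ, ‖f (circleMap 0 r θ)‖ₑ ^ p ∂circleMeasure ≤ hardyNorm p f ^ p := by
  have h := eLpNorm_comp_circleMap_le_hardyNorm hp f hr
  rw [eLpNorm_eq_lintegral_rpow_enorm_toReal (ENNReal.ofReal_pos.2 hp).ne' ENNReal.ofReal_ne_top,
    ENNReal.toReal_ofReal hp.le, ← ENNReal.rpow_le_rpow_iff hp, ← ENNReal.rpow_mul,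
    one_div_mul_cancel hp.ne', ENNReal.rpow_one] at h
  exact h

lemma enorm_le_enorm_zero_add_lintegral_deriv {g : ℂ → ℂ} (hg : DifferentiableOn ℂ g (ball 0 1))
    {w : ℂ} (hw : w ∈ ball 0 1) :
    ‖g w‖ₑ ≤ ‖g 0‖ₑ + ∫⁻ t in Ioc (0 : ℝ) 1, ‖deriv g (t * w)‖ₑ := by
  have hseg : ∀ t ∈ Icc (0 : ℝ) 1, (0 : ℂ) + t • w ∈ ball 0 1 := fun t ht ↦ by
    simpa using (convex_ball (0 : ℂ) 1).smul_mem_of_zero_mem (mem_ball_self one_pos) hw ht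
  have hftc := intervalIntegral.integral_unitInterval_deriv_eq_sub
    ((hg.deriv isOpen_ball).continuousOn.comp (by fun_prop) hseg)
    fun t ht ↦ (hg.differentiableAt (isOpen_ball.mem_nhds (hseg t ht))).hasDerivAt
  simp only [zero_add, real_smul, smul_eq_mul] at hftc
  have hw1 : ‖w‖ₑ ≤ 1 := by
    rw [← ofReal_norm, ENNReal.ofReal_le_one]
    exact (mem_ball_zero_iff.1 hw).le
  calc ‖g w‖ₑ = ‖g 0 + w * ∫ t in (0 : ℝ)..1, deriv g (t * w)‖ₑ := by rw [hftc, add_sub_cancel]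
    _ ≤ ‖g 0‖ₑ + ‖w‖ₑ * ‖∫ t in (0 : ℝ)..1, deriv g (t * w)‖ₑ := by
      grw [enorm_add_le, enorm_mul]
    _ ≤ ‖g 0‖ₑ + ∫⁻ t in Ioc (0 : ℝ) 1, ‖deriv g (t * w)‖ₑ := by
      grw [hw1, one_mul, intervalIntegral.integral_of_le zero_le_one,
        enorm_integral_le_lintegral_enorm]

lemma eLpNorm_lintegral_radial_le_hardyNorm {p : ℝ} (hp : 1 ≤ p) {h : ℂ → ℂ} (hh : Measurable h)
    {r : ℝ} (hr : r ∈ Ioo 0 1) :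
    eLpNorm (fun θ ↦ ∫⁻ t in Ioc (0 : ℝ) 1, ‖h (t * circleMap 0 r θ)‖ₑ) (ENNReal.ofReal p)
      circleMeasure ≤ hardyNorm p h := by
  have hp0 : 0 < p := one_pos.trans_le hp
  have : IsProbabilityMeasure (volume.restrict (Ioc (0 : ℝ) 1)) := ⟨by simp⟩
  have hmeas : Measurable (Function.uncurry fun θ t : ℝ ↦ ‖h (t * circleMap 0 r θ)‖ₑ) :=
    (hh.comp (by fun_prop :
      Continuous fun x : ℝ × ℝ ↦ (x.2 : ℂ) * circleMap 0 r x.1).measurable).enorm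
  have hslice : ∀ t ∈ Ioc (0 : ℝ) 1,
      ∫⁻ θ, ‖h (t * circleMap 0 r θ)‖ₑ ^ p ∂circleMeasure ≤ hardyNorm p h ^ p := fun t ht ↦ by
    have hcirc : ∀ θ, (t : ℂ) * circleMap 0 r θ = circleMap 0 (t * r) θ := fun θ ↦ by
      simp only [circleMap_zero, ofReal_mul]; ring
    simp only [hcirc]
    exact lintegral_enorm_rpow_le_hardyNorm_rpow hp0 h
      ⟨mul_pos ht.1 hr.1, by nlinarith [ht.2, hr.1, hr.2]⟩
  have hpow : ∫⁻ θ, (∫⁻ t in Ioc (0 : ℝ) 1, ‖h (t * circleMap 0 r θ)‖ₑ) ^ p ∂circleMeasure ≤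
      hardyNorm p h ^ p :=
    calc _ ≤ ∫⁻ θ, (∫⁻ t in Ioc (0 : ℝ) 1, ‖h (t * circleMap 0 r θ)‖ₑ ^ p) ∂circleMeasure :=
          lintegral_mono fun θ ↦ rpow_lintegral_le_lintegral_rpow
            (hmeas.comp measurable_prodMk_left).aemeasurable hp
      _ = ∫⁻ t in Ioc (0 : ℝ) 1, ∫⁻ θ, ‖h (t * circleMap 0 r θ)‖ₑ ^ p ∂circleMeasure :=
          lintegral_lintegral_swap (hmeas.pow_const p).aemeasurable
      _ ≤ ∫⁻ _ in Ioc (0 : ℝ) 1, hardyNorm p h ^ p := setLIntegral_mono measurable_const hslice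
      _ = hardyNorm p h ^ p := by simp
  rw [eLpNorm_eq_lintegral_rpow_enorm_toReal (ENNReal.ofReal_pos.2 hp0).ne' ENNReal.ofReal_ne_top,
    ENNReal.toReal_ofReal hp0.le]
  simp only [enorm_eq_self]
  calc _ ≤ (hardyNorm p h ^ p) ^ (1 / p) := by gcongr
    _ = hardyNorm p h := by rw [← ENNReal.rpow_mul, mul_one_div_cancel hp0.ne', ENNReal.rpow_one]

lemma hardyNorm_le_enorm_zero_add_hardyNorm_deriv {p : ℝ} (hp : 1 ≤ p) {g : ℂ → ℂ}
    (hg : DifferentiableOn ℂ g (ball 0 1)) :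
    hardyNorm p g ≤ ‖g 0‖ₑ + hardyNorm p (deriv g) := by
  rw [hardyNorm_eq_iSup_eLpNorm (one_pos.trans_le hp)]
  refine iSup_le fun ⟨r, hr⟩ ↦ ?_
  set U := fun θ : ℝ ↦ ∫⁻ t in Ioc (0 : ℝ) 1, ‖deriv g (t * circleMap 0 r θ)‖ₑ
  have hU : Measurable U := Measurable.lintegral_prod_right' <|
    ((measurable_deriv g).comp
      (by fun_prop : Continuous fun x : ℝ × ℝ ↦ (x.2 : ℂ) * circleMap 0 r x.1).measurable).enorm
  calc eLpNorm (fun θ ↦ g (circleMap 0 r θ)) (ENNReal.ofReal p) circleMeasure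
      ≤ eLpNorm ((fun _ ↦ ‖g 0‖ₑ) + U) (ENNReal.ofReal p) circleMeasure :=
        eLpNorm_mono_enorm fun θ ↦
          enorm_le_enorm_zero_add_lintegral_deriv hg <| by
            rw [mem_ball_zero_iff, norm_circleMap_zero, abs_of_pos hr.1]
            exact hr.2
    _ ≤ eLpNorm (fun _ ↦ ‖g 0‖ₑ) (ENNReal.ofReal p) circleMeasure +
          eLpNorm U (ENNReal.ofReal p) circleMeasure :=
        eLpNorm_add_le aestronglyMeasurable_const hU.aestronglyMeasurable
          (ENNReal.one_le_ofReal.2 hp)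
    _ ≤ ‖g 0‖ₑ + hardyNorm p (deriv g) := by
        rw [eLpNorm_const _ (ENNReal.ofReal_pos.2 (one_pos.trans_le hp)).ne'
          (IsProbabilityMeasure.ne_zero _), measure_univ, ENNReal.one_rpow, mul_one, enorm_eq_self]
        gcongr
        exact eLpNorm_lintegral_radial_le_hardyNorm hp (measurable_deriv g) hr

lemma one_sub_mem_slitPlane {w : ℂ} (hw : ‖w‖ < 1) : 1 - w ∈ slitPlane := by
  simpa [sub_eq_add_neg] using mem_slitPlane_of_norm_lt_one (z := -w) (by simpa using hw)

lemma one_sub_div_mem_slitPlane {z ζ : ℂ} (h : ‖z‖ < ‖ζ‖) : 1 - z / ζ ∈ slitPlane :=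
  one_sub_mem_slitPlane <| by rwa [norm_div, div_lt_one ((norm_nonneg z).trans_lt h)]

lemma hasDerivAt_log_one_sub_div {z ζ : ℂ} (h : ‖z‖ < ‖ζ‖) :
    HasDerivAt (fun ξ ↦ log (1 - z / ξ)) ((ζ - z)⁻¹ - ζ⁻¹) ζ := by
  have hζ : ζ ≠ 0 := norm_pos_iff.1 ((norm_nonneg z).trans_lt h)
  have hζz : ζ - z ≠ 0 := sub_ne_zero.2 fun h' ↦ h.ne (h' ▸ rfl)
  convert ((hasDerivAt_inv hζ).const_mul z).const_sub 1 |>.clog (one_sub_div_mem_slitPlane h)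
    using 1
  · simp [div_eq_mul_inv]
  · field_simp
    ring

lemma circleIntegrable_log_one_sub_div_mul {g : ℂ → ℂ} {ρ : ℝ} (hg : ContinuousOn g (sphere 0 ρ))
    {z : ℂ} (hz : ‖z‖ < ρ) : CircleIntegrable (fun ζ ↦ log (1 - z / ζ) * g ζ) 0 ρ :=
  ContinuousOn.circleIntegrable ((norm_nonneg z).trans hz.le) <| ContinuousOn.mul
    (fun ζ hζ ↦ (hasDerivAt_log_one_sub_div (z := z)
      (by rwa [mem_sphere_zero_iff_norm.1 hζ])).continuousAt.continuousWithinAt) hg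

lemma circleIntegral_log_one_sub_div_mul_deriv {f : ℂ → ℂ} {R ρ : ℝ}
    (hf : DifferentiableOn ℂ f (ball 0 R)) {z : ℂ} (hz : ‖z‖ < ρ) (hρ : ρ < R) :
    (∮ ζ in C(0, ρ), log (1 - z / ζ) * deriv f ζ) = 2 * π * I * (f 0 - f z) := by
  have hρ0 : 0 < ρ := (norm_nonneg z).trans_lt hz
  have hsphere : sphere (0 : ℂ) ρ ⊆ ball 0 R :=
    sphere_subset_closedBall.trans (closedBall_subset_ball hρ)
  have hz' : z ∈ ball (0 : ℂ) ρ := mem_ball_zero_iff.2 hz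
  have h0 : (0 : ℂ) ∈ ball (0 : ℂ) ρ := mem_ball_self hρ0
  have hcauchy : ∀ w ∈ ball (0 : ℂ) ρ, (∮ ζ in C(0, ρ), (ζ - w)⁻¹ • f ζ) = 2 * π * I * f w :=
    fun w hw ↦ (hf.mono (closedBall_subset_ball hρ)).circleIntegral_sub_inv_smul hw
  have hint : ∀ w ∈ ball (0 : ℂ) ρ, CircleIntegrable (fun ζ ↦ (ζ - w)⁻¹ • f ζ) 0 ρ := fun w hw ↦
    ((continuousOn_id.sub continuousOn_const).inv₀ (fun ζ hζ ↦ sub_ne_zero.2 (by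
      rintro rfl; simp_all)) |>.smul (hf.continuousOn.mono hsphere)).circleIntegrable hρ0.le
  have hparts := circleIntegral.integral_eq_zero_of_hasDerivWithinAt hρ0.le fun ζ hζ ↦
    ((hasDerivAt_log_one_sub_div (z := z) (by rwa [mem_sphere_zero_iff_norm.1 hζ])).mul
      (hf.differentiableAt (isOpen_ball.mem_nhds (hsphere hζ))).hasDerivAt).hasDerivWithinAt
  have key : ((∮ ζ in C(0, ρ), (ζ - z)⁻¹ • f ζ) - ∮ ζ in C(0, ρ), (ζ - 0)⁻¹ • f ζ) +
      (∮ ζ in C(0, ρ), log (1 - z / ζ) * deriv f ζ) = 0 := by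
    rw [← circleIntegral.integral_sub (hint z hz') (hint 0 h0),
      ← circleIntegral.integral_add (f := fun ζ ↦ (ζ - z)⁻¹ • f ζ - (ζ - 0)⁻¹ • f ζ)
        ((hint z hz').sub (hint 0 h0))
        (circleIntegrable_log_one_sub_div_mul
          ((hf.deriv isOpen_ball).continuousOn.mono hsphere) hz)]
    refine Eq.trans (congrArg (circleIntegral · 0 ρ) (funext fun ζ ↦ ?_)) hparts
    simp only [smul_eq_mul, sub_zero, sub_mul]
  rw [hcauchy z hz', hcauchy 0 h0] at key
  linear_combination key

lemma differentiableOn_log_one_sub_conj_mul_div {z : ℂ} {ρ : ℝ} (hz : ‖z‖ < ρ) :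
    DifferentiableOn ℂ (fun ζ ↦ log (1 - conj z * ζ / ρ ^ 2)) (closedBall 0 ρ) := by
  have hρ0 : 0 < ρ := (norm_nonneg z).trans_lt hz
  refine fun ζ hζ ↦ DifferentiableAt.differentiableWithinAt <|
    ((differentiableAt_id.const_mul _).div_const _).const_sub 1 |>.clog <| one_sub_mem_slitPlane ?_
  rw [mem_closedBall_zero_iff] at hζ
  rw [norm_div, norm_mul, norm_conj, norm_pow, norm_real, Real.norm_of_nonneg hρ0.le,
    div_lt_one (by positivity), sq]
  exact mul_lt_mul_of_lt_of_le_of_nonneg_of_pos hz hζ (norm_nonneg z) hρ0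

lemma norm_log_one_sub_conj_sub_log_one_sub_le_pi {w : ℂ} (hw : w.re ≤ 1) :
    ‖log (1 - conj w) - log (1 - w)‖ ≤ π := by
  have hre : 0 ≤ (1 - w).re := by simpa using hw
  have harg : (1 - w).arg ≠ π := fun h ↦ by linarith [(arg_eq_pi_iff.1 h).1]
  -- the difference is `conj L - L = -2i Im L`, and `Im (log (1 - w)) = arg (1 - w) ∈ [-π/2, π/2]`
  rw [show 1 - conj w = conj (1 - w) by simp, log_conj _ harg, ← neg_sub, norm_neg, sub_conj,
    norm_mul, norm_I, mul_one, norm_real, log_im, Real.norm_eq_abs, abs_mul, abs_two]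
  linarith [abs_arg_le_pi_div_two_iff.2 hre]

lemma norm_log_one_sub_conj_mul_div_sub_log_one_sub_div_le_pi {z ζ : ℂ} (h : ‖z‖ < ‖ζ‖) :
    ‖log (1 - conj z * ζ / ‖ζ‖ ^ 2) - log (1 - z / ζ)‖ ≤ π := by
  have hζ : ζ ≠ 0 := norm_pos_iff.1 ((norm_nonneg z).trans_lt h)
  have hconj : conj z * ζ / ‖ζ‖ ^ 2 = conj (z / ζ) := by
    rw [← mul_conj', map_div₀]
    field_simp
  rw [hconj]
  refine norm_log_one_sub_conj_sub_log_one_sub_le_pi ((re_le_norm _).trans ?_)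
  rw [norm_div, div_le_one ((norm_nonneg z).trans_lt h)]
  exact h.le

lemma enorm_circleIntegral_le_lintegral {E : Type*} [NormedAddCommGroup E] [NormedSpace ℂ E]
    (F : ℂ → E) (c : ℂ) {R : ℝ} (hR : 0 ≤ R) :
    ‖∮ ζ in C(c, R), F ζ‖ₑ ≤
      ENNReal.ofReal (2 * π * R) * ∫⁻ θ, ‖F (circleMap c R θ)‖ₑ ∂circleMeasure := by
  have hderiv : ∀ θ, ‖deriv (circleMap c R) θ‖ₑ = ENNReal.ofReal R := fun θ ↦ by
    rw [deriv_circleMap, ← ofReal_norm, norm_mul, norm_I, mul_one, norm_circleMap_zero,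
      abs_of_nonneg hR]
  rw [circleIntegral, intervalIntegral.integral_of_le Real.two_pi_pos.le, circleMeasure,
    lintegral_smul_measure, smul_eq_mul, ENNReal.ofReal_mul Real.two_pi_pos.le,
    mul_comm (ENNReal.ofReal _),
    mul_assoc, ENNReal.mul_inv_cancel_left (ENNReal.ofReal_pos.2 Real.two_pi_pos).ne'
      ENNReal.ofReal_ne_top, ← lintegral_const_mul' _ _ ENNReal.ofReal_ne_top]
  refine (enorm_integral_le_lintegral_enorm _).trans_eq ?_
  simp only [enorm_smul, hderiv]

lemma enorm_sub_le_ofReal_pi_mul_lintegral_deriv {f : ℂ → ℂ} {R ρ : ℝ}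
    (hf : DifferentiableOn ℂ f (ball 0 R)) {z : ℂ} (hz : ‖z‖ < ρ) (hρ : ρ < R) :
    ‖f z - f 0‖ₑ ≤
      ENNReal.ofReal (π * ρ) * ∫⁻ θ, ‖deriv f (circleMap 0 ρ θ)‖ₑ ∂circleMeasure := by
  have hρ0 : 0 < ρ := (norm_nonneg z).trans_lt hz
  have hf' : DifferentiableOn ℂ (deriv f) (closedBall 0 ρ) :=
    (hf.deriv isOpen_ball).mono (closedBall_subset_ball hρ)
  have hcorr : DifferentiableOn ℂ (fun ζ ↦ log (1 - conj z * ζ / ρ ^ 2) * deriv f ζ)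
      (closedBall 0 ρ) := (differentiableOn_log_one_sub_conj_mul_div hz).mul hf'
  have hrep : 2 * π * I * (f z - f 0) = ∮ ζ in C(0, ρ),
      (log (1 - conj z * ζ / ρ ^ 2) - log (1 - z / ζ)) * deriv f ζ := by
    simp_rw [sub_mul]
    rw [circleIntegral.integral_sub
        ((hcorr.continuousOn.mono sphere_subset_closedBall).circleIntegrable hρ0.le)
        (circleIntegrable_log_one_sub_div_mul (hf'.continuousOn.mono sphere_subset_closedBall) hz),
      (hcorr.diffContOnCl_ball subset_rfl).circleIntegral_eq_zero hρ0.le,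
      circleIntegral_log_one_sub_div_mul_deriv hf hz hρ]
    ring
  have hkernel : ∀ θ, ‖(log (1 - conj z * circleMap 0 ρ θ / ρ ^ 2) -
      log (1 - z / circleMap 0 ρ θ)) * deriv f (circleMap 0 ρ θ)‖ₑ ≤
      ENNReal.ofReal π * ‖deriv f (circleMap 0 ρ θ)‖ₑ := fun θ ↦ by
    have hζ : ‖circleMap 0 ρ θ‖ = ρ := by simp [abs_of_pos hρ0]
    have hK := norm_log_one_sub_conj_mul_div_sub_log_one_sub_div_le_pi (hζ ▸ hz)
    rw [hζ] at hK
    rw [enorm_mul, ← ofReal_norm (_ - _)]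
    gcongr
  have h2π : ‖(2 * π * I : ℂ)‖ₑ = ENNReal.ofReal (2 * π) := by
    rw [← ofReal_norm, norm_mul, norm_I, mul_one, norm_mul, Complex.norm_two, norm_real,
      Real.norm_of_nonneg Real.pi_pos.le]
  rw [← ENNReal.mul_le_mul_iff_right (ENNReal.ofReal_pos.2 Real.two_pi_pos).ne'
    ENNReal.ofReal_ne_top]
  calc ENNReal.ofReal (2 * π) * ‖f z - f 0‖ₑ
      = ‖∮ ζ in C(0, ρ), (log (1 - conj z * ζ / ρ ^ 2) - log (1 - z / ζ)) * deriv f ζ‖ₑ := by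
        rw [← hrep, enorm_mul, h2π]
    _ ≤ ENNReal.ofReal (2 * π * ρ) * ∫⁻ θ, ‖(log (1 - conj z * circleMap 0 ρ θ / ρ ^ 2) -
          log (1 - z / circleMap 0 ρ θ)) * deriv f (circleMap 0 ρ θ)‖ₑ ∂circleMeasure :=
        enorm_circleIntegral_le_lintegral _ 0 hρ0.le
    _ ≤ ENNReal.ofReal (2 * π * ρ) *
          ∫⁻ θ, ENNReal.ofReal π * ‖deriv f (circleMap 0 ρ θ)‖ₑ ∂circleMeasure := by
        gcongr with θ
        exact hkernel θ
    _ = ENNReal.ofReal (2 * π) * (ENNReal.ofReal (π * ρ) *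
          ∫⁻ θ, ‖deriv f (circleMap 0 ρ θ)‖ₑ ∂circleMeasure) := by
        rw [lintegral_const_mul' _ _ ENNReal.ofReal_ne_top, ← mul_assoc, ← mul_assoc,
          ← ENNReal.ofReal_mul (by positivity), ← ENNReal.ofReal_mul (by positivity)]
        ring_nf

lemma enorm_le_enorm_zero_add_pi_mul_hardyNorm_deriv {p : ℝ} (hp : 1 ≤ p) {f : ℂ → ℂ}
    (hf : DifferentiableOn ℂ f (ball 0 1)) {z : ℂ} (hz : z ∈ ball 0 1) :
    ‖f z‖ₑ ≤ ‖f 0‖ₑ + ENNReal.ofReal π * hardyNorm p (deriv f) := by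
  have hp0 : 0 < p := one_pos.trans_le hp
  obtain ⟨ρ, hzρ, hρ1⟩ := exists_between (mem_ball_zero_iff.1 hz)
  have hρ : ρ ∈ Ioo 0 1 := ⟨(norm_nonneg z).trans_lt hzρ, hρ1⟩
  have hmean : ∫⁻ θ, ‖deriv f (circleMap 0 ρ θ)‖ₑ ∂circleMeasure ≤ hardyNorm p (deriv f) := by
    rw [← ENNReal.rpow_le_rpow_iff hp0]
    exact (rpow_lintegral_le_lintegral_rpow
      ((measurable_deriv f).comp (continuous_circleMap 0 ρ).measurable).enorm.aemeasurable hp).trans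
        (lintegral_enorm_rpow_le_hardyNorm_rpow hp0 _ hρ)
  calc ‖f z‖ₑ = ‖f 0 + (f z - f 0)‖ₑ := by rw [add_sub_cancel]
    _ ≤ ‖f 0‖ₑ + ‖f z - f 0‖ₑ := enorm_add_le _ _
    _ ≤ ‖f 0‖ₑ + ENNReal.ofReal (π * ρ) * ∫⁻ θ, ‖deriv f (circleMap 0 ρ θ)‖ₑ ∂circleMeasure := by
        gcongr
        exact enorm_sub_le_ofReal_pi_mul_lintegral_deriv hf hzρ hρ.2
    _ ≤ ‖f 0‖ₑ + ENNReal.ofReal π * hardyNorm p (deriv f) := by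
        gcongr
        exact mul_le_of_le_one_right Real.pi_pos.le hρ1.le

lemma snNorm_le_snNorm_succ {p : ℝ} (hp : 1 ≤ p) (n : ℕ) {f : ℂ → ℂ}
    (hf : DifferentiableOn ℂ f (ball 0 1)) : snNorm n p f ≤ snNorm (n + 1) p f := by
  induction n generalizing f with
  | zero => simpa [snNorm, ofReal_norm] using hardyNorm_le_enorm_zero_add_hardyNorm_deriv hp hf
  | succ n ih =>
    rw [snNorm, snNorm]
    gcongr
    exact ih (hf.deriv isOpen_ball)

lemma snNorm_mono {p : ℝ} (hp : 1 ≤ p) {f : ℂ → ℂ} (hf : DifferentiableOn ℂ f (ball 0 1)) :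
    Monotone fun n ↦ snNorm n p f :=
  monotone_nat_of_le_succ fun n ↦ snNorm_le_snNorm_succ hp n hf

lemma one_le_ofReal_pi : 1 ≤ ENNReal.ofReal π :=
  ENNReal.one_le_ofReal.2 (by linarith [Real.pi_gt_three])

lemma supNorm_le_pi_mul_snNorm_one {p : ℝ} (hp : 1 ≤ p) {f : ℂ → ℂ}
    (hf : DifferentiableOn ℂ f (ball 0 1)) : supNorm f ≤ ENNReal.ofReal π * snNorm 1 p f := by
  refine iSup₂_le fun z hz ↦ ?_
  rw [snNorm, snNorm, mul_add, ofReal_norm, ofReal_norm]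
  calc ‖f z‖ₑ ≤ ‖f 0‖ₑ + ENNReal.ofReal π * hardyNorm p (deriv f) :=
        enorm_le_enorm_zero_add_pi_mul_hardyNorm_deriv hp hf hz
    _ ≤ ENNReal.ofReal π * ‖f 0‖ₑ + ENNReal.ofReal π * hardyNorm p (deriv f) := by
        gcongr
        exact le_mul_of_one_le_left' one_le_ofReal_pi

theorem norm_chain_general (n : ℕ) (p : ℝ) (hp : 1 ≤ p) (f : ℂ → ℂ)
    (hf : MemS n p f) :
    supNorm f ≤ ENNReal.ofReal Real.pi * snNorm 1 p f ∧
    (∀ k, 1 ≤ k → k ≤ n →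
      ENNReal.ofReal Real.pi ^ (k-1) * snNorm (k-1) p f ≤
        ENNReal.ofReal Real.pi ^ k * snNorm k p f) ∧
    snNorm (n-1) p f ≤ ENNReal.ofReal Real.pi * snNorm n p f := by
  have hmono := snNorm_mono hp hf.1
  refine ⟨supNorm_le_pi_mul_snNorm_one hp hf.1, fun k _ _ ↦ ?_, ?_⟩
  · gcongr
    · exact one_le_ofReal_pi
    · exact Nat.sub_le k 1
    · exact hmono (Nat.sub_le k 1)
  · exact (hmono (Nat.sub_le n 1)).trans (le_mul_of_one_le_left' one_le_ofReal_pi)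

theorem norm_chain (n : ℕ) (p : ℝ) (hn : 1 ≤ n) (hp : 1 ≤ p) (f : ℂ → ℂ)
    (hf : MemS n p f) :
    supNorm f ≤ ENNReal.ofReal Real.pi * snNorm 1 p f ∧
    (∀ k, 1 ≤ k → k ≤ n →
      ENNReal.ofReal Real.pi ^ (k-1) * snNorm (k-1) p f ≤
        ENNReal.ofReal Real.pi ^ k * snNorm k p f) ∧
    snNorm (n-1) p f ≤ ENNReal.ofReal Real.pi * snNorm n p f :=
  norm_chain_general n p hp f hf
end

section
/- For every n ≥ 1 and 1 ≤ p < ∞, one has the chain of inclusions S_n^p ⊂ S_{n-1}^p ⊂ ⋯ ⊂ S_1^p ⊂ H^∞, where H^∞ is the space of bounded analytic functions on the unit disk. -/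
open MeasureTheory Metric Set Filter

/-!
If `g' ∈ H^p` with `p ≥ 1` then also `g' ∈ H^1` (use `x ≤ x^p + 1`), so the length
`r ∫ |g'(r e^{iφ})| dφ` of the image of the circle `|z| = r` under `g` is bounded uniformly in
`r < 1`. Hence `g` oscillates boundedly on every such circle, and since `g 0` is the mean of `g`
over the circle, `|g z - g 0|` is bounded too: `g ∈ H^∞ ⊂ H^p`. Applied to `g = f^{(m)}` this
gives `S_{m+1}^p ⊂ S_m^p`, and for `m = 0` it gives `S_1^p ⊂ H^∞`.
-/

open Real

section CircleEstimates

variable {E : Type*} [NormedAddCommGroup E] {c : ℂ} {R : ℝ}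

lemma norm_circleAverage_le [NormedSpace ℝ E] {f : ℂ → E} {C : ℝ}
    (hf : ∀ w ∈ sphere c |R|, ‖f w‖ ≤ C) : ‖circleAverage f c R‖ ≤ C := by
  have h := intervalIntegral.norm_integral_le_of_norm_le_const (a := 0) (b := 2 * π)
    (fun θ _ ↦ hf _ (circleMap_mem_sphere' c R θ))
  rw [circleAverage_def, norm_smul, norm_inv, Real.norm_of_nonneg two_pi_pos.le]
  rw [sub_zero, abs_of_pos two_pi_pos] at h
  calc (2 * π)⁻¹ * ‖∫ θ in 0..2 * π, f (circleMap c R θ)‖ ≤ (2 * π)⁻¹ * (C * (2 * π)) := by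
        gcongr
    _ = C := by field_simp

variable [NormedSpace ℂ E] [CompleteSpace E] {g : ℂ → E} {U : Set ℂ}

lemma continuous_deriv_comp_circleMap (hU : IsOpen U) (hg : DifferentiableOn ℂ g U)
    (hR : sphere c |R| ⊆ U) : Continuous fun θ ↦ deriv g (circleMap c R θ) :=
  ((hg.deriv hU).continuousOn.mono hR).comp_continuous (continuous_circleMap c R)
    (circleMap_mem_sphere' c R)

lemma norm_sub_circleMap_zero_le (hU : IsOpen U) (hg : DifferentiableOn ℂ g U)
    (hR : sphere c |R| ⊆ U) {θ : ℝ} (hθ : θ ∈ Icc 0 (2 * π)) :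
    ‖g (circleMap c R θ) - g (circleMap c R 0)‖ ≤
      |R| * ∫ φ in 0..2 * π, ‖deriv g (circleMap c R φ)‖ := by
  have hcont := continuous_deriv_comp_circleMap hU hg hR
  have hcont' : Continuous fun φ ↦ (circleMap 0 R φ * Complex.I) • deriv g (circleMap c R φ) :=
    (by fun_prop : Continuous fun φ ↦ circleMap 0 R φ * Complex.I).smul hcont
  have hderiv (φ : ℝ) : HasDerivAt (g ∘ circleMap c R)
      ((circleMap 0 R φ * Complex.I) • deriv g (circleMap c R φ)) φ :=
    (hg.differentiableAt (hU.mem_nhds (hR (circleMap_mem_sphere' c R φ)))).hasDerivAt.scomp φ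
      (hasDerivAt_circleMap c R φ)
  rw [← Function.comp_apply (f := g), ← Function.comp_apply (f := g) (x := 0),
    ← intervalIntegral.integral_eq_sub_of_hasDerivAt (fun φ _ ↦ hderiv φ)
      (hcont'.intervalIntegrable _ _),
    ← intervalIntegral.integral_const_mul]
  calc _ ≤ ∫ φ in 0..θ, |R| * ‖deriv g (circleMap c R φ)‖ :=
        intervalIntegral.norm_integral_le_of_norm_le hθ.1
          (ae_of_all _ fun φ _ ↦ by simp [norm_smul])
          ((continuous_const.mul hcont.norm).intervalIntegrable _ _)
    _ ≤ _ :=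
        intervalIntegral.integral_mono_interval le_rfl hθ.1 hθ.2
          (ae_of_all _ fun φ ↦ by positivity)
          ((continuous_const.mul hcont.norm).intervalIntegrable _ _)

lemma norm_sub_le_of_mem_sphere (hU : IsOpen U) (hg : DifferentiableOn ℂ g U)
    (hR : sphere c |R| ⊆ U) {w₁ w₂ : ℂ} (hw₁ : w₁ ∈ sphere c |R|) (hw₂ : w₂ ∈ sphere c |R|) :
    ‖g w₁ - g w₂‖ ≤ 2 * (|R| * ∫ φ in 0..2 * π, ‖deriv g (circleMap c R φ)‖) := by
  rw [← image_circleMap_Ioc] at hw₁ hw₂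
  obtain ⟨θ₁, hθ₁, rfl⟩ := hw₁
  obtain ⟨θ₂, hθ₂, rfl⟩ := hw₂
  have h₁ := norm_sub_circleMap_zero_le hU hg hR (Ioc_subset_Icc_self hθ₁)
  have h₂ := norm_sub_circleMap_zero_le hU hg hR (Ioc_subset_Icc_self hθ₂)
  rw [← norm_neg, neg_sub] at h₂
  linarith [norm_sub_le_norm_sub_add_norm_sub (g (circleMap c R θ₁)) (g (circleMap c R 0))
    (g (circleMap c R θ₂))]

lemma norm_sub_center_le (hU : IsOpen U) (hg : DifferentiableOn ℂ g U)
    (hR : closedBall c |R| ⊆ U) {z : ℂ} (hz : z ∈ sphere c |R|) :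
    ‖g z - g c‖ ≤ 2 * (|R| * ∫ φ in 0..2 * π, ‖deriv g (circleMap c R φ)‖) := by
  have hsphere : sphere c |R| ⊆ U := sphere_subset_closedBall.trans hR
  have hmean : circleAverage g c R = g c := (hg.diffContOnCl_ball hR).circleAverage
  rw [← hmean, ← circleAverage_const (g z) c R,
    ← circleAverage_fun_sub (circleIntegrable_const _ _ _)
      ((hg.continuousOn.mono hsphere).circleIntegrable')]
  exact norm_circleAverage_le fun w hw ↦ norm_sub_le_of_mem_sphere hU hg hsphere hz hw

end CircleEstimates

lemma le_rpow_add_one {x p : ℝ} (hx : 0 ≤ x) (hp : 1 ≤ p) : x ≤ x ^ p + 1 := by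
  rcases le_total x 1 with hx1 | hx1
  · linarith [Real.rpow_nonneg hx p]
  · linarith [Real.self_le_rpow_of_one_le hx1 hp]

lemma ofReal_two_pi_ne_zero : ENNReal.ofReal (2 * π) ≠ 0 := by
  simpa using two_pi_pos

lemma lintegral_circleMap_le_hardyNorm_rpow {p : ℝ} (hp : 0 < p) (h : ℂ → ℂ) {r : ℝ}
    (hr : r ∈ Ioo 0 1) :
    ∫⁻ θ in Ioc 0 (2 * π), ENNReal.ofReal (‖h (circleMap 0 r θ)‖ ^ p) ≤
      hardyNorm p h ^ p * ENNReal.ofReal (2 * π) := by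
  have hle : ((∫⁻ θ in Ioc 0 (2 * π),
      ENNReal.ofReal (‖h (r * Complex.exp (θ * Complex.I))‖ ^ p)) / ENNReal.ofReal (2 * π)) ^
        (1 / p) ≤ hardyNorm p h := by
    rw [hardyNorm]
    exact le_iSup_of_le ⟨r, hr⟩ le_rfl
  rw [one_div, ENNReal.rpow_inv_le_iff hp,
    ENNReal.div_le_iff ofReal_two_pi_ne_zero ENNReal.ofReal_ne_top] at hle
  simpa only [circleMap_zero] using hle

lemma hardyNorm_le_supNorm {p : ℝ} (hp : 0 < p) (g : ℂ → ℂ) : hardyNorm p g ≤ supNorm g := by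
  refine iSup_le fun ⟨r, hr⟩ ↦ ?_
  rw [one_div, ENNReal.rpow_inv_le_iff hp,
    ENNReal.div_le_iff ofReal_two_pi_ne_zero ENNReal.ofReal_ne_top]
  calc ∫⁻ θ in Ioc 0 (2 * π), ENNReal.ofReal (‖g (r * Complex.exp (θ * Complex.I))‖ ^ p)
      ≤ ∫⁻ _ in Ioc 0 (2 * π), supNorm g ^ p := by
        refine lintegral_mono fun θ ↦ ?_
        rw [← ENNReal.ofReal_rpow_of_nonneg (norm_nonneg _) hp.le, ← circleMap_zero]
        gcongr
        refine le_iSup₂ (f := fun z (_ : z ∈ ball (0 : ℂ) 1) ↦ ENNReal.ofReal ‖g z‖) _ ?_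
        simpa [abs_of_pos hr.1] using hr.2
    _ = supNorm g ^ p * ENNReal.ofReal (2 * π) := by
        rw [setLIntegral_const, Real.volume_Ioc, sub_zero]

lemma lintegral_norm_circleMap_le {p : ℝ} (hp : 1 ≤ p) (h : ℂ → ℂ) {r : ℝ} (hr : r ∈ Ioo 0 1) :
    ∫⁻ θ in Ioc 0 (2 * π), ENNReal.ofReal ‖h (circleMap 0 r θ)‖ ≤
      (hardyNorm p h ^ p + 1) * ENNReal.ofReal (2 * π) := by
  calc ∫⁻ θ in Ioc 0 (2 * π), ENNReal.ofReal ‖h (circleMap 0 r θ)‖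
      ≤ ∫⁻ θ in Ioc 0 (2 * π), (ENNReal.ofReal (‖h (circleMap 0 r θ)‖ ^ p) + 1) := by
        refine lintegral_mono fun θ ↦ ?_
        rw [← ENNReal.ofReal_one, ← ENNReal.ofReal_add (by positivity) zero_le_one]
        exact ENNReal.ofReal_le_ofReal (le_rpow_add_one (norm_nonneg _) hp)
    _ = (∫⁻ θ in Ioc 0 (2 * π), ENNReal.ofReal (‖h (circleMap 0 r θ)‖ ^ p)) +
          ENNReal.ofReal (2 * π) := by
        rw [lintegral_add_right _ measurable_const, setLIntegral_const, one_mul, Real.volume_Ioc,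
          sub_zero]
    _ ≤ (hardyNorm p h ^ p + 1) * ENNReal.ofReal (2 * π) := by
        rw [add_mul, one_mul]
        gcongr
        exact lintegral_circleMap_le_hardyNorm_rpow (by linarith) h hr

lemma supNorm_le_of_hardyNorm_deriv {p : ℝ} (hp : 1 ≤ p) {g : ℂ → ℂ}
    (hg : DifferentiableOn ℂ g (ball 0 1)) :
    supNorm g ≤ ENNReal.ofReal ‖g 0‖ +
      2 * ((hardyNorm p (deriv g) ^ p + 1) * ENNReal.ofReal (2 * π)) := by
  refine iSup₂_le fun z hz ↦ ?_
  rcases eq_or_ne z 0 with rfl | hz0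
  · exact le_self_add
  set r := ‖z‖
  have hr : r ∈ Ioo 0 1 := ⟨norm_pos_iff.2 hz0, mem_ball_zero_iff.1 hz⟩
  have hball : closedBall (0 : ℂ) |r| ⊆ ball 0 1 :=
    closedBall_subset_ball (by rw [abs_of_pos hr.1]; exact hr.2)
  set V := ∫ φ in 0..2 * π, ‖deriv g (circleMap 0 r φ)‖ with hV_def
  have hosc : ‖g z - g 0‖ ≤ 2 * (|r| * V) :=
    norm_sub_center_le isOpen_ball hg hball (by simp [r])
  have hV :
      ENNReal.ofReal V = ∫⁻ φ in Ioc 0 (2 * π), ENNReal.ofReal ‖deriv g (circleMap 0 r φ)‖ := by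
    rw [hV_def, intervalIntegral.integral_of_le two_pi_pos.le]
    exact ofReal_integral_eq_lintegral_ofReal
      (continuous_deriv_comp_circleMap isOpen_ball hg
        (sphere_subset_closedBall.trans hball)).norm.integrableOn_Ioc
      (ae_of_all _ fun _ ↦ norm_nonneg _)
  have hV0 : 0 ≤ V := intervalIntegral.integral_nonneg two_pi_pos.le fun _ _ ↦ norm_nonneg _
  calc ENNReal.ofReal ‖g z‖ ≤ ENNReal.ofReal (‖g 0‖ + 2 * V) := by
        refine ENNReal.ofReal_le_ofReal ?_
        have : |r| * V ≤ V := mul_le_of_le_one_left hV0 (by rw [abs_of_pos hr.1]; exact hr.2.le)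
        linarith [norm_le_norm_add_norm_sub' (g z) (g 0)]
    _ = ENNReal.ofReal ‖g 0‖ + 2 * ENNReal.ofReal V := by
        rw [ENNReal.ofReal_add (norm_nonneg _) (by positivity), ENNReal.ofReal_mul zero_le_two,
          ENNReal.ofReal_ofNat]
    _ ≤ _ := by
        rw [hV]
        gcongr
        exact lintegral_norm_circleMap_le hp _ hr

lemma supNorm_lt_top_of_hardyNorm_deriv_lt_top {p : ℝ} (hp : 1 ≤ p) {g : ℂ → ℂ}
    (hg : DifferentiableOn ℂ g (ball 0 1)) (h : hardyNorm p (deriv g) < ⊤) : supNorm g < ⊤ := by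
  refine (supNorm_le_of_hardyNorm_deriv hp hg).trans_lt ?_
  have : hardyNorm p (deriv g) ^ p < ⊤ := ENNReal.rpow_lt_top_of_nonneg (by linarith) h.ne
  finiteness

lemma DifferentiableOn.iteratedDeriv {E : Type*} [NormedAddCommGroup E] [NormedSpace ℂ E]
    [CompleteSpace E] {f : ℂ → E} {s : Set ℂ} (hf : DifferentiableOn ℂ f s) (hs : IsOpen s)
    (m : ℕ) : DifferentiableOn ℂ (iteratedDeriv m f) s := by
  induction m with
  | zero => simpa
  | succ m ih => simpa only [iteratedDeriv_succ] using ih.deriv hs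

lemma MemS.of_succ {m : ℕ} {p : ℝ} {f : ℂ → ℂ} (hp : 1 ≤ p) (hf : MemS (m + 1) p f) :
    MemS m p f := by
  refine ⟨hf.1, (hardyNorm_le_supNorm (by linarith) _).trans_lt ?_⟩
  refine supNorm_lt_top_of_hardyNorm_deriv_lt_top hp (hf.1.iteratedDeriv isOpen_ball m) ?_
  simpa only [iteratedDeriv_succ] using hf.2

lemma MemS.mono {j k : ℕ} {p : ℝ} {f : ℂ → ℂ} (hp : 1 ≤ p) (hjk : j ≤ k) (hf : MemS k p f) :
    MemS j p f := by
  induction hjk with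
  | refl => exact hf
  | step _ ih => exact ih (hf.of_succ hp)

lemma MemS.supNorm_lt_top {p : ℝ} {f : ℂ → ℂ} (hp : 1 ≤ p) (hf : MemS 1 p f) :
    supNorm f < ⊤ :=
  supNorm_lt_top_of_hardyNorm_deriv_lt_top hp hf.1 (by simpa only [iteratedDeriv_one] using hf.2)

theorem inclusion_chain_general (n : ℕ) (p : ℝ) (hp : 1 ≤ p) :
    (∀ j k : ℕ, j ≤ k → k ≤ n → ∀ f : ℂ → ℂ, MemS k p f → MemS j p f) ∧
    (∀ f : ℂ → ℂ, MemS 1 p f → supNorm f < ⊤) :=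
  ⟨fun _ _ hjk _ _ hf ↦ hf.mono hp hjk, fun _ hf ↦ hf.supNorm_lt_top hp⟩

theorem inclusion_chain (n : ℕ) (p : ℝ) (hn : 1 ≤ n) (hp : 1 ≤ p) :
    (∀ j k : ℕ, j ≤ k → k ≤ n → ∀ f : ℂ → ℂ, MemS k p f → MemS j p f) ∧
    (∀ f : ℂ → ℂ, MemS 1 p f → supNorm f < ⊤) :=
  inclusion_chain_general n p hp
end
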